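/- arXiv:1602.01408 — 3 statements merged into one kernel-verified Lean document; each statement's English description precedes it below -/
import Mathlib

section
/- Let H be a complex Hilbert space and let A, P, Q be bounded linear operators on H with P and Q positive, satisfying A Q A* = A* P A. If both P and Q are invertible, then Ker(A) = Ker(A*) and Ran(A) = Ran(A*). -/
/-!
Write `Q = S²` and `P = T²` with `S = √Q`, `T = √P` positive and invertible. Pairing
`A Q A* = A* P A` with `x` gives `‖S A* x‖ = ‖T A x‖` for all `x`. Two operators with the same
norm on every vector have the same kernel, and (Douglas' lemma, via Hahn–Banach and Riesz) their
adjoints have the same range. Since `S` and `T` are bijective, `ker (S A*) = ker A*`,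
`ker (T A) = ker A`, `ran (S A*)* = ran (A S) = ran A` and `ran (T A)* = ran (A* T) = ran A*`.
-/

open scoped ComplexOrder InnerProductSpace
open ContinuousLinearMap

theorem ContinuousLinearMap.exists_comp_eq_of_norm_le {𝕜 E G : Type*} [RCLike 𝕜]
    [NormedAddCommGroup E] [NormedSpace 𝕜 E] [NormedAddCommGroup G] [NormedSpace 𝕜 G]
    (C : E →L[𝕜] G) (φ : E →L[𝕜] 𝕜) {M : ℝ} (h : ∀ x, ‖φ x‖ ≤ M * ‖C x‖) :
    ∃ g : G →L[𝕜] 𝕜, g ∘L C = φ := by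
  have hker : LinearMap.ker (C : E →ₗ[𝕜] G) ≤ LinearMap.ker (φ : E →ₗ[𝕜] 𝕜) := fun x hx => by
    simpa [show C x = 0 from hx] using h x
  let ℓ : LinearMap.range (C : E →ₗ[𝕜] G) →ₗ[𝕜] 𝕜 :=
    (LinearMap.ker (C : E →ₗ[𝕜] G)).liftQ φ hker ∘ₗ
      (C : E →ₗ[𝕜] G).quotKerEquivRange.symm.toLinearMap
  have hℓ : ∀ x, ℓ ⟨C x, LinearMap.mem_range_self _ x⟩ = φ x := fun x =>
    congrArg ((LinearMap.ker (C : E →ₗ[𝕜] G)).liftQ (φ : E →ₗ[𝕜] 𝕜) hker)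
      ((C : E →ₗ[𝕜] G).quotKerEquivRange_symm_apply_image x (LinearMap.mem_range_self _ x))
  have hbound : ∀ z, ‖ℓ z‖ ≤ M * ‖z‖ := by
    rintro ⟨_, x, rfl⟩
    exact (hℓ x).symm ▸ h x
  obtain ⟨g, hg, -⟩ := exists_extension_norm_eq _ (ℓ.mkContinuous M hbound)
  exact ⟨g, ext fun x => (hg ⟨C x, LinearMap.mem_range_self _ x⟩).trans (hℓ x)⟩

section Douglas

variable {𝕜 E F G : Type*} [RCLike 𝕜]
  [NormedAddCommGroup E] [InnerProductSpace 𝕜 E] [CompleteSpace E]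
  [NormedAddCommGroup F] [InnerProductSpace 𝕜 F] [CompleteSpace F]
  [NormedAddCommGroup G] [InnerProductSpace 𝕜 G] [CompleteSpace G]

theorem ContinuousLinearMap.range_adjoint_le_of_norm_le (B : E →L[𝕜] F) (C : E →L[𝕜] G) {c : ℝ}
    (h : ∀ x, ‖B x‖ ≤ c * ‖C x‖) :
    LinearMap.range (adjoint B : F →ₗ[𝕜] E) ≤ LinearMap.range (adjoint C : G →ₗ[𝕜] E) := by
  rintro _ ⟨y, rfl⟩
  have hφ : ∀ x, ‖innerSL 𝕜 y (B x)‖ ≤ (c * ‖y‖) * ‖C x‖ := fun x =>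
    calc ‖innerSL 𝕜 y (B x)‖ ≤ ‖y‖ * ‖B x‖ := norm_inner_le_norm y (B x)
      _ ≤ ‖y‖ * (c * ‖C x‖) := by gcongr; exact h x
      _ = (c * ‖y‖) * ‖C x‖ := by ring
  obtain ⟨g, hg⟩ := exists_comp_eq_of_norm_le C ((innerSL 𝕜 y) ∘L B) hφ
  refine ⟨(InnerProductSpace.toDual 𝕜 G).symm g, ext_inner_right 𝕜 fun x => ?_⟩
  simp only [coe_coe, adjoint_inner_left, InnerProductSpace.toDual_symm_apply]
  exact congr($hg x)

theorem ContinuousLinearMap.ker_eq_and_range_adjoint_eq_of_norm_eq (B : E →L[𝕜] F) (C : E →L[𝕜] G)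
    (h : ∀ x, ‖B x‖ = ‖C x‖) :
    LinearMap.ker (B : E →ₗ[𝕜] F) = LinearMap.ker (C : E →ₗ[𝕜] G) ∧
      LinearMap.range (adjoint B : F →ₗ[𝕜] E) = LinearMap.range (adjoint C : G →ₗ[𝕜] E) := by
  refine ⟨?_, le_antisymm ?_ ?_⟩
  · ext x
    simp [← norm_eq_zero (a := B x), h]
  · exact range_adjoint_le_of_norm_le B C (c := 1) fun x => by simp [h]
  · exact range_adjoint_le_of_norm_le C B (c := 1) fun x => by simp [h]

end Douglas

theorem ContinuousLinearMap.isPositive_of_forall_inner_nonneg {E : Type*} [NormedAddCommGroup E]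
    [InnerProductSpace ℂ E] (T : E →L[ℂ] E) (hT : ∀ x, 0 ≤ ⟪T x, x⟫_ℂ) : T.IsPositive := by
  refine (isPositive_iff_complex T).2 fun x => ?_
  obtain ⟨hre, him⟩ := Complex.nonneg_iff.1 (hT x)
  exact ⟨Complex.ext rfl (by simp [him]), hre⟩

section Sqrt

variable {H : Type*} [NormedAddCommGroup H] [InnerProductSpace ℂ H] [CompleteSpace H]

theorem ContinuousLinearMap.inner_apply_self_eq_norm_sqrt_apply_sq {T : H →L[ℂ] H} (hT : 0 ≤ T)
    (x : H) : ⟪T x, x⟫_ℂ = (‖CFC.sqrt T x‖ ^ 2 : ℝ) := by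
  have hS : IsSelfAdjoint (CFC.sqrt T) := (CFC.sqrt_nonneg T).isSelfAdjoint
  conv_lhs => rw [← CFC.sqrt_mul_sqrt_self T]
  rw [mul_def, comp_apply, ← adjoint_inner_right, hS.adjoint_eq, inner_self_eq_norm_sq_to_K]
  simp

theorem ContinuousLinearMap.norm_sqrt_adjoint_apply_eq_of_comp_eq {A P Q : H →L[ℂ] H}
    (hP : 0 ≤ P) (hQ : 0 ≤ Q) (hAQA : A ∘L Q ∘L adjoint A = adjoint A ∘L P ∘L A) (x : H) :
    ‖CFC.sqrt Q (adjoint A x)‖ = ‖CFC.sqrt P (A x)‖ := by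
  have h := congr(⟪$hAQA x, x⟫_ℂ)
  simp only [comp_apply, ← adjoint_inner_right A, adjoint_inner_left,
    inner_apply_self_eq_norm_sqrt_apply_sq hP, inner_apply_self_eq_norm_sqrt_apply_sq hQ] at h
  exact (pow_left_inj₀ (norm_nonneg _) (norm_nonneg _) two_ne_zero).1 (by exact_mod_cast h)

end Sqrt

/-- If `A Q A* = A* P A` with `P, Q` positive and both `P` and
`Q` invertible, then `ker A = ker A*` and `ran A = ran A*`. -/
theorem ker_eq_and_range_eq_of_invertible_interrupters
    {H : Type*} [NormedAddCommGroup H] [InnerProductSpace ℂ H] [CompleteSpace H]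
    (A P Q : H →L[ℂ] H)
    (hP : ∀ f : H, 0 ≤ (inner ℂ (P f) f : ℂ))
    (hQ : ∀ f : H, 0 ≤ (inner ℂ (Q f) f : ℂ))
    (hAQA : A ∘L Q ∘L adjoint A = adjoint A ∘L P ∘L A)
    (hPinv : IsUnit P) (hQinv : IsUnit Q) :
    LinearMap.ker (A : H →ₗ[ℂ] H) = LinearMap.ker (adjoint A : H →ₗ[ℂ] H) ∧
      LinearMap.range (A : H →ₗ[ℂ] H) = LinearMap.range (adjoint A : H →ₗ[ℂ] H) := by
  have hP₀ : 0 ≤ P := (nonneg_iff_isPositive P).2 (isPositive_of_forall_inner_nonneg P hP)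
  have hQ₀ : 0 ≤ Q := (nonneg_iff_isPositive Q).2 (isPositive_of_forall_inner_nonneg Q hQ)
  have hSbij := isUnit_iff_bijective.1 ((CFC.isUnit_sqrt_iff Q).2 hQinv)
  have hTbij := isUnit_iff_bijective.1 ((CFC.isUnit_sqrt_iff P).2 hPinv)
  have hSadj : adjoint (CFC.sqrt Q) = CFC.sqrt Q := (CFC.sqrt_nonneg Q).isSelfAdjoint.adjoint_eq
  have hTadj : adjoint (CFC.sqrt P) = CFC.sqrt P := (CFC.sqrt_nonneg P).isSelfAdjoint.adjoint_eq
  obtain ⟨hker, hran⟩ := ker_eq_and_range_adjoint_eq_of_norm_eq (CFC.sqrt P ∘L A)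
    (CFC.sqrt Q ∘L adjoint A) fun x => (norm_sqrt_adjoint_apply_eq_of_comp_eq hP₀ hQ₀ hAQA x).symm
  rw [toLinearMap_comp, toLinearMap_comp,
    LinearMap.ker_comp_of_ker_eq_bot _ (LinearMap.ker_eq_bot.2 hTbij.1),
    LinearMap.ker_comp_of_ker_eq_bot _ (LinearMap.ker_eq_bot.2 hSbij.1)] at hker
  rw [adjoint_comp, adjoint_comp, adjoint_adjoint, hSadj, hTadj, toLinearMap_comp, toLinearMap_comp,
    LinearMap.range_comp_of_range_eq_top _ (LinearMap.range_eq_top.2 hTbij.2),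
    LinearMap.range_comp_of_range_eq_top _ (LinearMap.range_eq_top.2 hSbij.2)] at hran
  exact ⟨hker, hran.symm⟩
end

section
/- For every real number α > −1, the generalized Cesàro operator of order one C = (C^(α),1) on ℓ² is posinormal and coposinormal: there exists a positive bounded operator P on ℓ² with C C* = C* P C, and there exists a positive bounded operator Q on ℓ² with C Q C* = C* C. -/
/-!
If `C = C† G` then `C C† = C† (G G†) C`, and if `C H = C†` then `C† C = C (H H†) C†`, where
`G G†` and `H H†` are positive. Both factors are explicit: `G = B (C - 1)`, with `B` the backward
shift, is the formal product `(C†)⁻¹ C` of triangular matrices, and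
`H = C† + α ⟪C e₀, ·⟫ e₀ - B†`. On matrix entries, `C† G = C` reduces to the telescoping sum
`∑_{k ≥ m} d_k d_{k+1} = d_m` for the weights `d_k = 1/(k+1+α)`, since
`d_k d_{k+1} = d_k - d_{k+1}`; `C H = C†` is a finite computation using `d_k (k+1+α) = 1`.
-/

open scoped ComplexOrder
open ContinuousLinearMap

/-- The standard orthonormal basis vectors of `ℓ² = ℓ²(ℕ, ℂ)`. -/
noncomputable def e (n : ℕ) : lp (fun _ : ℕ => ℂ) 2 := lp.single 2 n 1

open scoped InnerProductSpace lp
open Filter Topology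

section Posinormal

variable {E : Type*} [NormedAddCommGroup E] [InnerProductSpace ℂ E] [CompleteSpace E]

def IsPosinormal (A : E →L[ℂ] E) : Prop :=
  ∃ P : E →L[ℂ] E, (∀ f, 0 ≤ ⟪P f, f⟫_ℂ) ∧ A ∘L adjoint A = adjoint A ∘L P ∘L A

def IsCoposinormal (A : E →L[ℂ] E) : Prop :=
  ∃ Q : E →L[ℂ] E, (∀ f, 0 ≤ ⟪Q f, f⟫_ℂ) ∧ A ∘L Q ∘L adjoint A = adjoint A ∘L A

theorem IsPosinormal.of_eq_adjoint_comp {A G : E →L[ℂ] E} (h : A = adjoint A ∘L G) :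
    IsPosinormal A := by
  have h' : adjoint A = adjoint G ∘L A := by
    conv_lhs => rw [h, adjoint_comp, adjoint_adjoint]
  refine ⟨G ∘L adjoint G, (isPositive_self_comp_adjoint G).inner_nonneg_left, ?_⟩
  calc A ∘L adjoint A = (adjoint A ∘L G) ∘L (adjoint G ∘L A) := by rw [← h, ← h']
    _ = adjoint A ∘L (G ∘L adjoint G) ∘L A := by simp only [comp_assoc]

theorem IsCoposinormal.of_comp_eq_adjoint {A H : E →L[ℂ] E} (h : A ∘L H = adjoint A) :
    IsCoposinormal A := by
  have h' : adjoint H ∘L adjoint A = A := by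
    rw [← adjoint_comp, h, adjoint_adjoint]
  refine ⟨H ∘L adjoint H, (isPositive_self_comp_adjoint H).inner_nonneg_left, ?_⟩
  calc A ∘L (H ∘L adjoint H) ∘L adjoint A = (A ∘L H) ∘L (adjoint H ∘L adjoint A) := by
        simp only [comp_assoc]
    _ = adjoint A ∘L A := by rw [h, h']

end Posinormal

theorem Antitone.hasSum_sub_succ {f : ℕ → ℝ} {l : ℝ} (hf : Antitone f)
    (hl : Tendsto f atTop (𝓝 l)) : HasSum (fun n => f n - f (n + 1)) (f 0 - l) := by
  refine (hasSum_iff_tendsto_nat_of_nonneg (fun n => sub_nonneg.2 (hf n.le_succ)) _).2 ?_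
  simp_rw [Finset.sum_range_sub']
  exact tendsto_const_nhds.sub hl

section SequenceSpace

theorem inner_e_left (f : ℓ²(ℕ, ℂ)) (i : ℕ) : ⟪e i, f⟫_ℂ = f i := by
  simp [e, lp.inner_single_left]

theorem e_apply (j i : ℕ) : e j i = if i = j then 1 else 0 := by
  simp [e, lp.single_apply, Pi.single_apply]

theorem ext_e {F : Type*} [AddCommMonoid F] [Module ℂ F] [TopologicalSpace F] [T2Space F]
    {T T' : ℓ²(ℕ, ℂ) →L[ℂ] F} (h : ∀ n, T (e n) = T' (e n)) : T = T' :=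
  lp.ext_continuousLinearMap ENNReal.ofNat_ne_top fun n => ext_ring (h n)

noncomputable def backwardShift : ℓ²(ℕ, ℂ) →L[ℂ] ℓ²(ℕ, ℂ) :=
  LinearMap.mkContinuous
    { toFun := fun f => ⟨fun n => f (n + 1),
        memℓp_gen ((summable_nat_add_iff 1).2 ((lp.memℓp f).summable (by norm_num)))⟩
      map_add' := fun _ _ => rfl
      map_smul' := fun _ _ => rfl } 1
    fun f => by
      rw [one_mul]
      refine lp.norm_le_of_forall_sum_le (by norm_num) (norm_nonneg f) fun s => ?_
      calc _ = ∑ i ∈ s.map (addRightEmbedding 1), ‖f i‖ ^ (2 : ENNReal).toReal :=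
            (Finset.sum_map _ _ _).symm
        _ ≤ _ := lp.sum_rpow_le_norm_rpow (by norm_num) f _

@[simp]
theorem backwardShift_apply (f : ℓ²(ℕ, ℂ)) (n : ℕ) : backwardShift f n = f (n + 1) := rfl

theorem backwardShift_e_zero : backwardShift (e 0) = 0 := by
  ext n; simp [e_apply]

theorem backwardShift_e_succ (m : ℕ) : backwardShift (e (m + 1)) = e m := by
  ext n; simp [e_apply]

theorem adjoint_backwardShift_e (m : ℕ) : adjoint backwardShift (e m) = e (m + 1) := by
  ext n
  rw [← inner_e_left, adjoint_inner_right]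
  cases n with
  | zero => simp [backwardShift_e_zero, e_apply]
  | succ n => simp [backwardShift_e_succ, inner_e_left, e_apply, eq_comm]

end SequenceSpace

noncomputable def cesaroWeight (α : ℝ) (n : ℕ) : ℝ := 1 / ((n : ℝ) + 1 + α)

section CesaroWeight

variable {α : ℝ}

theorem cesaroWeight_mul_denom (hα : -1 < α) (n : ℕ) :
    cesaroWeight α n * ((n : ℝ) + 1 + α) = 1 :=
  one_div_mul_cancel (by have := n.cast_nonneg (α := ℝ); linarith)

theorem cesaroWeight_pos (hα : -1 < α) (n : ℕ) : 0 < cesaroWeight α n :=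
  one_div_pos.2 (by have := n.cast_nonneg (α := ℝ); linarith)

theorem cesaroWeight_mul_succ (hα : -1 < α) (n : ℕ) :
    cesaroWeight α n * cesaroWeight α (n + 1) = cesaroWeight α n - cesaroWeight α (n + 1) := by
  have h := cesaroWeight_mul_denom hα n
  have h' := cesaroWeight_mul_denom hα (n + 1)
  push_cast at h'
  linear_combination cesaroWeight α n * h' - cesaroWeight α (n + 1) * h

theorem tendsto_cesaroWeight_atTop : Tendsto (cesaroWeight α) atTop (𝓝 0) := by
  refine (tendsto_atTop_add_const_right _ α (tendsto_atTop_add_const_right _ 1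
    tendsto_natCast_atTop_atTop)).inv_tendsto_atTop.congr fun n => ?_
  simp [cesaroWeight]

theorem hasSum_cesaroWeight_mul_succ (hα : -1 < α) (m : ℕ) :
    HasSum (fun k => if m ≤ k then cesaroWeight α k * cesaroWeight α (k + 1) else 0)
      (cesaroWeight α m) := by
  have hanti : Antitone fun k => cesaroWeight α (k + m) := antitone_nat_of_succ_le fun k => by
    rw [add_right_comm, ← sub_nonneg, ← cesaroWeight_mul_succ hα]
    exact (mul_pos (cesaroWeight_pos hα _) (cesaroWeight_pos hα _)).le
  have htel := hanti.hasSum_sub_succ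
    (tendsto_cesaroWeight_atTop.comp (tendsto_add_atTop_nat m))
  rw [zero_add, sub_zero] at htel
  refine (hasSum_nat_add_iff' m).1 ?_
  rw [Finset.sum_eq_zero fun k hk => if_neg (Nat.not_le.2 (Finset.mem_range.1 hk)), sub_zero]
  refine htel.congr_fun fun k => ?_
  rw [if_pos (Nat.le_add_left m k), cesaroWeight_mul_succ hα, add_right_comm]

end CesaroWeight

section CesaroOperator

variable {α : ℝ} {C : ℓ²(ℕ, ℂ) →L[ℂ] ℓ²(ℕ, ℂ)}
  (hC : ∀ i j : ℕ, ⟪e i, C (e j)⟫_ℂ = if j ≤ i then (cesaroWeight α i : ℂ) else 0)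
include hC

theorem cesaro_e_apply (i j : ℕ) : C (e j) i = if j ≤ i then (cesaroWeight α i : ℂ) else 0 := by
  rw [← inner_e_left, hC]

theorem adjoint_cesaro_e_apply (i j : ℕ) :
    adjoint C (e j) i = if i ≤ j then (cesaroWeight α j : ℂ) else 0 := by
  rw [← inner_e_left, adjoint_inner_right, ← inner_conj_symm, hC]
  split_ifs <;> simp

theorem adjoint_cesaro_e (i : ℕ) :
    adjoint C (e i) = (cesaroWeight α i : ℂ) • ∑ k ∈ Finset.range (i + 1), e k := by
  ext n
  rw [adjoint_cesaro_e_apply hC, lp.coeFn_smul, lp.coeFn_sum]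
  simp [e_apply]

theorem cesaro_apply (f : ℓ²(ℕ, ℂ)) (i : ℕ) :
    C f i = cesaroWeight α i * ∑ k ∈ Finset.range (i + 1), f k := by
  rw [← inner_e_left, ← adjoint_inner_left, adjoint_cesaro_e hC, inner_smul_left, sum_inner]
  simp [inner_e_left]

-- At `j = 0` the truncated `j - 1 = 0` is still the right index, as `0 ≤ k + 1` for every `k`.
theorem inner_cesaro_e_backwardShift_cesaro_e (hα : -1 < α) (i j : ℕ) :
    ⟪C (e i), backwardShift (C (e j))⟫_ℂ = cesaroWeight α (max i (j - 1)) := by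
  refine (lp.hasSum_inner _ _).unique <|
    (Complex.hasSum_ofReal.2 (hasSum_cesaroWeight_mul_succ hα _)).congr_fun fun k => ?_
  have hmax : max i (j - 1) ≤ k ↔ i ≤ k ∧ j ≤ k + 1 := by omega
  by_cases hi : i ≤ k <;> by_cases hj : j ≤ k + 1 <;>
    simp [RCLike.inner_apply, cesaro_e_apply hC, hmax, hi, hj, mul_comm]

theorem adjoint_cesaro_comp_backwardShift_comp (hα : -1 < α) :
    adjoint C ∘L backwardShift ∘L (C - 1) = C := by
  refine ext_e fun j => lp.ext (funext fun i => ?_)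
  rw [← inner_e_left, comp_apply, comp_apply, adjoint_inner_right, sub_apply, one_apply_eq_self,
    map_sub, inner_sub_right, inner_cesaro_e_backwardShift_cesaro_e hC hα, cesaro_e_apply hC]
  cases j with
  | zero => simp [backwardShift_e_zero]
  | succ m =>
    rw [backwardShift_e_succ, ← adjoint_inner_right, inner_e_left, adjoint_cesaro_e_apply hC,
      Nat.add_sub_cancel]
    by_cases h : i ≤ m
    · simp [h, show ¬ m + 1 ≤ i by omega]
    · simp [h, show m + 1 ≤ i by omega, show max i m = i by omega]

theorem inner_cesaro_e_zero_e (j : ℕ) : ⟪C (e 0), e j⟫_ℂ = cesaroWeight α j := by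
  rw [← adjoint_inner_right, inner_e_left, adjoint_cesaro_e_apply hC, if_pos j.zero_le]

theorem cesaro_comp_eq_adjoint (hα : -1 < α) :
    C ∘L (adjoint C + (α : ℂ) • (innerSL ℂ (C (e 0))).smulRight (e 0) - adjoint backwardShift)
      = adjoint C := by
  set H := adjoint C + (α : ℂ) • (innerSL ℂ (C (e 0))).smulRight (e 0) - adjoint backwardShift
  refine ext_e fun j => lp.ext (funext fun i => ?_)
  have hHe : H (e j) = adjoint C (e j) + ((α : ℂ) * cesaroWeight α j) • e 0 - e (j + 1) := by
    rw [sub_apply, add_apply, smul_apply, smulRight_apply, innerSL_apply_apply,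
      inner_cesaro_e_zero_e hC, adjoint_backwardShift_e, smul_smul]
  have hsum : ∑ k ∈ Finset.range (i + 1), H (e j) k
      = ((min i j : ℕ) + 1) * cesaroWeight α j + α * cesaroWeight α j - if j < i then 1 else 0 := by
    have hcount : ({k ∈ Finset.range (i + 1) | k ≤ j} : Finset ℕ).card = min i j + 1 := by
      rw [show {k ∈ Finset.range (i + 1) | k ≤ j} = Finset.range (min i j + 1) by ext; simp]
      exact Finset.card_range _
    simp only [hHe, lp.coeFn_sub, lp.coeFn_add, lp.coeFn_smul, Pi.sub_apply, Pi.add_apply,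
      Pi.smul_apply, smul_eq_mul, adjoint_cesaro_e_apply hC, e_apply]
    simp [Finset.sum_add_distrib, Finset.sum_sub_distrib, Finset.sum_ite, hcount]
  have hi : (cesaroWeight α i : ℂ) * ((i : ℂ) + 1 + α) = 1 := by
    exact_mod_cast cesaroWeight_mul_denom hα i
  have hj : (cesaroWeight α j : ℂ) * ((j : ℂ) + 1 + α) = 1 := by
    exact_mod_cast cesaroWeight_mul_denom hα j
  rw [comp_apply, cesaro_apply hC, hsum, adjoint_cesaro_e_apply hC]
  rcases le_or_gt i j with h | h
  · rw [min_eq_left h, if_neg h.not_gt, if_pos h]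
    linear_combination (cesaroWeight α j : ℂ) * hi
  · rw [min_eq_right h.le, if_pos h, if_neg h.not_ge]
    linear_combination (cesaroWeight α i : ℂ) * hj

end CesaroOperator

/-- For every `α > -1`, the generalized Cesàro operator of
order one is posinormal and coposinormal. -/
theorem cesaro_order_one_posinormal_coposinormal (α : ℝ) (hα : α > -1)
    (C : lp (fun _ : ℕ => ℂ) 2 →L[ℂ] lp (fun _ : ℕ => ℂ) 2)
    (hC : ∀ i j : ℕ, (inner ℂ (e i) (C (e j)) : ℂ) =
      if j ≤ i then ((1 / ((i : ℝ) + 1 + α) : ℝ) : ℂ) else 0) :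
    (∃ P : lp (fun _ : ℕ => ℂ) 2 →L[ℂ] lp (fun _ : ℕ => ℂ) 2,
      (∀ f, 0 ≤ (inner ℂ (P f) f : ℂ)) ∧
        C ∘L adjoint C = adjoint C ∘L P ∘L C) ∧
    (∃ Q : lp (fun _ : ℕ => ℂ) 2 →L[ℂ] lp (fun _ : ℕ => ℂ) 2,
      (∀ f, 0 ≤ (inner ℂ (Q f) f : ℂ)) ∧
        C ∘L Q ∘L adjoint C = adjoint C ∘L C) :=
  ⟨IsPosinormal.of_eq_adjoint_comp (adjoint_cesaro_comp_backwardShift_comp hC hα).symm,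
    IsCoposinormal.of_comp_eq_adjoint (cesaro_comp_eq_adjoint hC hα)⟩
end

section
/- Let α > −1 be a real number, let M = (C^(α),2) be the generalized Cesàro operator of order two on ℓ², and let B be the bounded operator on ℓ² with matrix entries b_{ij} = 2(j+1−3i−2α)/((j+3+α)(j+4+α)) if j > i−2, b_{ij} = (j+1+α)(j+2+α)/((j+3+α)(j+4+α)) if j = i−2, and b_{ij} = 0 if j < i−2. Then the matrix entries p_{ij} = ⟨B*B e_j, e_i⟩ of P = B*B are given by: p_{ii} = [i⁴ + 2(5+2α)i³ + (35+26α+6α²)i² + (50+50α+34α²+4α³)i + α⁴ + 6α³ + 45α² + 28α + 24] / [(i+3+α)²(i+4+α)²] for all i, and p_{ij} = −2α(11 + (5−α)(i+j) + 2ij − 5α + 2α²) / [(i+3+α)(i+4+α)(j+3+α)(j+4+α)] for all i ≠ j. -/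
/-!
Column `m` of `B` vanishes below row `m + 2`, so `⟨B*B e_j, e_i⟩ = ⟨B e_i, B e_j⟩` is the finite
sum `∑_{k < min i j + 3} b_{ki} b_{kj}`, symmetric in `i` and `j`. For `i ≤ j` every term but the
last uses the entries above the second subdiagonal, which are affine in `k`; their sum is
evaluated through `∑ k` and `∑ k²`, and the last term is `b_{i+2,i} b_{i+2,j}`. What remains is
a rational-function identity in `i`, `j`, `α`.
-/

open ContinuousLinearMap

open Finset

theorem lp.inner_eq_sum_of_inner_eq_zero {ι 𝕜 : Type*} [RCLike 𝕜] {G : ι → Type*}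
    [∀ i, NormedAddCommGroup (G i)] [∀ i, InnerProductSpace 𝕜 (G i)] {f g : lp G 2}
    {s : Finset ι} (h : ∀ k ∉ s, (inner 𝕜 (f k) (g k) : 𝕜) = 0) :
    (inner 𝕜 f g : 𝕜) = ∑ k ∈ s, inner 𝕜 (f k) (g k) :=
  (lp.inner_eq_tsum f g).trans (tsum_eq_sum h)

theorem inner_e_left_s19 (n : ℕ) (f : lp (fun _ : ℕ => ℂ) 2) : (inner ℂ (e n) f : ℂ) = f n := by
  simp [e, lp.inner_single_left]

theorem inner_e_adjoint_comp_self_e {B : lp (fun _ : ℕ => ℂ) 2 →L[ℂ] lp (fun _ : ℕ => ℂ) 2}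
    {b : ℕ → ℕ → ℝ} {w : ℕ} (hB : ∀ k m, B (e m) k = b k m)
    (hb : ∀ k m, m + w ≤ k → b k m = 0) (i j : ℕ) :
    (inner ℂ (e i) ((adjoint B ∘L B) (e j)) : ℂ) =
      ((∑ k ∈ range (min i j + w), b k i * b k j : ℝ) : ℂ) := by
  rw [comp_apply, adjoint_inner_right, lp.inner_eq_sum_of_inner_eq_zero (s := range (min i j + w))]
  · push_cast
    refine sum_congr rfl fun k _ => ?_
    simp [hB, mul_comm]
  · intro k hk
    rw [mem_range, not_lt] at hk
    rcases le_total i j with hij | hij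
    · simp [hB, hb k i (by omega)]
    · simp [hB, hb k j (by omega)]

theorem two_mul_sum_range_sub_mul_sub {R : Type*} [CommRing R] (c d : R) (n : ℕ) :
    2 * ∑ k ∈ range n, (c - 3 * k) * (d - 3 * k) =
      2 * n * c * d - 3 * (c + d) * (n * (n - 1)) + 3 * (n * (n - 1) * (2 * n - 1)) := by
  induction n with
  | zero => simp
  | succ n ih => rw [sum_range_succ, mul_add, ih]; push_cast; ring

namespace CesaroInterrupter

variable (α : ℝ)

noncomputable def upperEntry (k m : ℕ) : ℝ :=
  2 * ((m : ℝ) + 1 - 3 * k - 2 * α) / (((m : ℝ) + 3 + α) * ((m : ℝ) + 4 + α))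

noncomputable def secondSubdiagEntry (m : ℕ) : ℝ :=
  ((m : ℝ) + 1 + α) * ((m : ℝ) + 2 + α) / (((m : ℝ) + 3 + α) * ((m : ℝ) + 4 + α))

/-- Row `k`, column `m`: the hypothesis on `B` becomes `B (e m) k = entry α k m`. -/
noncomputable def entry (k m : ℕ) : ℝ :=
  if (k : ℤ) - 2 < m then upperEntry α k m else if (m : ℤ) = k - 2 then secondSubdiagEntry α m else 0

noncomputable def diagFormula (x : ℝ) : ℝ :=
  (x ^ 4 + 2 * (5 + 2 * α) * x ^ 3 + (35 + 26 * α + 6 * α ^ 2) * x ^ 2 +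
      (50 + 50 * α + 34 * α ^ 2 + 4 * α ^ 3) * x + α ^ 4 + 6 * α ^ 3 + 45 * α ^ 2 + 28 * α + 24) /
    ((x + 3 + α) ^ 2 * (x + 4 + α) ^ 2)

noncomputable def offDiagFormula (x y : ℝ) : ℝ :=
  -(2 * α * (11 + (5 - α) * (x + y) + 2 * x * y - 5 * α + 2 * α ^ 2)) /
    ((x + 3 + α) * (x + 4 + α) * (y + 3 + α) * (y + 4 + α))

theorem offDiagFormula_comm (x y : ℝ) : offDiagFormula α x y = offDiagFormula α y x := by
  unfold offDiagFormula; ring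

theorem entry_eq_zero_of_add_three_le {k m : ℕ} (h : m + 3 ≤ k) : entry α k m = 0 := by
  rw [entry, if_neg (by omega), if_neg (by omega)]

theorem sum_upperEntry_mul_upperEntry (i j n : ℕ) :
    ∑ k ∈ range n, upperEntry α k i * upperEntry α k j =
      2 / (((i : ℝ) + 3 + α) * ((i : ℝ) + 4 + α)) / (((j : ℝ) + 3 + α) * ((j : ℝ) + 4 + α)) *
        (2 * ∑ k ∈ range n, ((i + 1 - 2 * α) - 3 * k) * ((j + 1 - 2 * α) - 3 * k)) := by
  rw [mul_sum, mul_sum]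
  refine sum_congr rfl fun k _ => ?_
  unfold upperEntry
  ring

variable {α}

theorem sum_upperEntry_sq_add_secondSubdiagEntry_sq (hα : -1 < α) (i : ℕ) :
    ∑ k ∈ range (i + 2), upperEntry α k i * upperEntry α k i + secondSubdiagEntry α i * secondSubdiagEntry α i =
      diagFormula α i := by
  have hi : (0 : ℝ) ≤ i := i.cast_nonneg
  have h3 : (i : ℝ) + 3 + α ≠ 0 := by linarith
  have h4 : (i : ℝ) + 4 + α ≠ 0 := by linarith
  rw [sum_upperEntry_mul_upperEntry, two_mul_sum_range_sub_mul_sub, secondSubdiagEntry, diagFormula]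
  field_simp
  push_cast
  ring

theorem sum_upperEntry_mul_add_secondSubdiagEntry_mul (hα : -1 < α) (i j : ℕ) :
    ∑ k ∈ range (i + 2), upperEntry α k i * upperEntry α k j +
        secondSubdiagEntry α i * upperEntry α (i + 2) j = offDiagFormula α i j := by
  have hi : (0 : ℝ) ≤ i := i.cast_nonneg
  have hj : (0 : ℝ) ≤ j := j.cast_nonneg
  have hi3 : (i : ℝ) + 3 + α ≠ 0 := by linarith
  have hi4 : (i : ℝ) + 4 + α ≠ 0 := by linarith
  have hj3 : (j : ℝ) + 3 + α ≠ 0 := by linarith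
  have hj4 : (j : ℝ) + 4 + α ≠ 0 := by linarith
  rw [sum_upperEntry_mul_upperEntry, two_mul_sum_range_sub_mul_sub, secondSubdiagEntry, upperEntry,
    offDiagFormula]
  field_simp
  push_cast
  ring

theorem sum_entry_mul_entry_of_le (hα : -1 < α) {i j : ℕ} (hij : i ≤ j) :
    ∑ k ∈ range (i + 3), entry α k i * entry α k j =
      if i = j then diagFormula α i else offDiagFormula α i j := by
  have hgen : ∀ k ∈ range (i + 2), entry α k i * entry α k j = upperEntry α k i * upperEntry α k j := by
    intro k hk
    rw [mem_range] at hk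
    rw [entry, entry, if_pos (by omega), if_pos (by omega)]
  rw [sum_range_succ, sum_congr rfl hgen, entry, if_neg (by omega), if_pos (by omega)]
  split_ifs with h
  · subst h
    rw [entry, if_neg (by omega), if_pos (by omega)]
    exact sum_upperEntry_sq_add_secondSubdiagEntry_sq hα i
  · rw [entry, if_pos (by omega)]
    exact sum_upperEntry_mul_add_secondSubdiagEntry_mul hα i j

end CesaroInterrupter

open CesaroInterrupter in
/-- With `B` the operator with the stated matrix entries,
the matrix entries `p_{ij} = ⟨B*B e_j, e_i⟩` of the interrupter `P = B*B` are
as displayed in Lemma 3.1(c). -/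
theorem interrupter_entries_of_BstarB (α : ℝ) (hα : α > -1)
    (B : lp (fun _ : ℕ => ℂ) 2 →L[ℂ] lp (fun _ : ℕ => ℂ) 2)
    (hB : ∀ i j : ℕ, (inner ℂ (e i) (B (e j)) : ℂ) =
      if (i : ℤ) - 2 < (j : ℤ) then
        ((2 * ((j : ℝ) + 1 - 3 * i - 2 * α) /
          (((j : ℝ) + 3 + α) * ((j : ℝ) + 4 + α)) : ℝ) : ℂ)
      else if (j : ℤ) = (i : ℤ) - 2 then
        (((((j : ℝ) + 1 + α) * ((j : ℝ) + 2 + α)) /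
          ((((j : ℝ) + 3 + α)) * (((j : ℝ) + 4 + α))) : ℝ) : ℂ)
      else 0) :
    ∀ i j : ℕ, (inner ℂ (e i) ((adjoint B ∘L B) (e j)) : ℂ) =
      if i = j then
        ((((i : ℝ) ^ 4 + 2 * (5 + 2 * α) * (i : ℝ) ^ 3 +
            (35 + 26 * α + 6 * α ^ 2) * (i : ℝ) ^ 2 +
            (50 + 50 * α + 34 * α ^ 2 + 4 * α ^ 3) * (i : ℝ) +
            α ^ 4 + 6 * α ^ 3 + 45 * α ^ 2 + 28 * α + 24) /
          (((i : ℝ) + 3 + α) ^ 2 * ((i : ℝ) + 4 + α) ^ 2) : ℝ) : ℂ)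
      else
        ((-(2 * α * (11 + (5 - α) * ((i : ℝ) + (j : ℝ)) + 2 * (i : ℝ) * (j : ℝ)
            - 5 * α + 2 * α ^ 2)) /
          (((i : ℝ) + 3 + α) * ((i : ℝ) + 4 + α) *
            ((j : ℝ) + 3 + α) * ((j : ℝ) + 4 + α)) : ℝ) : ℂ) := by
  have hcol : ∀ k m, B (e m) k = entry α k m := by
    intro k m
    rw [← inner_e_left_s19, hB, entry, upperEntry, secondSubdiagEntry]
    split_ifs <;> simp
  have hsum : ∀ i j, i ≤ j → ∑ k ∈ range (min i j + 3), entry α k i * entry α k j =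
      if i = j then diagFormula α i else offDiagFormula α i j := fun i j hij => by
    rw [min_eq_left hij, sum_entry_mul_entry_of_le hα hij]
  intro i j
  rw [inner_e_adjoint_comp_self_e hcol (fun _ _ => entry_eq_zero_of_add_three_le α)]
  rcases le_total i j with hij | hji
  · rw [hsum i j hij]
    split_ifs <;> rfl
  · simp_rw [min_comm i j, mul_comm (entry α _ i), hsum j i hji, eq_comm (a := j),
      offDiagFormula_comm α j]
    split_ifs with h
    · subst h; rfl
    · rfl
end
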